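/- Let N̂ be an independent set of points in a projective geometry P. Then Ω(N̂, Ê^•(N̂)), the biased graph constructed from the set of all points on edge lines of N̂, is a full biased expansion of the complete graph K_N on the node set N corresponding to N̂: it has a half edge at every node, and the natural projection sending each link to the edge of K_N determined by its endpoints makes it a biased expansion of K_N. -/

import Mathlib

open scoped Classical

/-! ## Graphs with parallel links and half edges -/

/-- A multigraph: each edge has a finite set of endpoints
(one endpoint for a half edge, two endpoints for a link). -/
structure MGraph (N : Type*) (E : Type*) where
  ends : E → Finset N

namespace MGraph

variable {N E : Type*} (G : MGraph N E)

/-- A link has two distinct endpoints. -/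
def IsLink (e : E) : Prop := (G.ends e).card = 2

/-- A half edge has exactly one endpoint. -/
def IsHalfEdge (e : E) : Prop := (G.ends e).card = 1

/-- The set of nodes of a set of edges. -/
def nodeSet (S : Set E) : Set N := {v | ∃ e ∈ S, v ∈ G.ends e}

/-- The nodes of a finite set of edges. -/
noncomputable def nodesOf (S : Finset E) : Finset N := S.biUnion G.ends

/-- The degree of a node in a finite edge set. -/
noncomputable def degreeIn (S : Finset E) (v : N) : ℕ :=
  (S.filter (fun e => v ∈ G.ends e)).card

/-- Two nodes joined by an edge of `S`. -/
def adjIn (S : Set E) (u v : N) : Prop := ∃ e ∈ S, u ∈ G.ends e ∧ v ∈ G.ends e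

/-- Connectivity of nodes through edges of `S`. -/
def nodeConn (S : Set E) : N → N → Prop := Relation.ReflTransGen (G.adjIn S)

/-- The components of the spanning subgraph `(N, S)`, as sets of nodes. -/
def components (S : Set E) : Set (Set N) := {W | ∃ v : N, W = {u | G.nodeConn S u v}}

/-- The number of components of the spanning subgraph `(N, S)`. -/
noncomputable def numComponents (S : Set E) : ℕ := Nat.card ↥(G.components S)

/-- The components of the non-spanning subgraph `(N(S), S)`. -/
def componentsOn (S : Set E) : Set (Set N) :=
  {W | ∃ v ∈ G.nodeSet S, W = {u | G.nodeConn S u v}}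

/-- The edges of `S` whose endpoints all lie in a node set `W`. -/
def edgesIn (S : Set E) (W : Set N) : Set E := {e | e ∈ S ∧ ∀ v ∈ G.ends e, v ∈ W}

/-- An edge set is connected if any two of its edges are joined through
consecutively intersecting edges of the set. -/
def ConnEdges (S : Set E) : Prop :=
  ∀ e ∈ S, ∀ f ∈ S, Relation.ReflTransGen
    (fun a b => a ∈ S ∧ b ∈ S ∧ ∃ v : N, v ∈ G.ends a ∧ v ∈ G.ends b) e f

/-- A circle: the edge set of a connected subgraph in which every node has degree 2. -/
def IsCircle (C : Finset E) : Prop :=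
  C.Nonempty ∧ (∀ e ∈ C, G.IsLink e) ∧ G.ConnEdges ↑C ∧
    ∀ v ∈ G.nodesOf C, G.degreeIn C v = 2

/-- A (simple, open) path joining two distinct nodes `u` and `v`. -/
def IsPath (Q : Finset E) (u v : N) : Prop :=
  Q.Nonempty ∧ u ≠ v ∧ (∀ e ∈ Q, G.IsLink e) ∧ G.ConnEdges ↑Q ∧
    u ∈ G.nodesOf Q ∧ v ∈ G.nodesOf Q ∧
    G.degreeIn Q u = 1 ∧ G.degreeIn Q v = 1 ∧
    ∀ w ∈ G.nodesOf Q, w ≠ u → w ≠ v → G.degreeIn Q w = 2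

/-- A simple graph: all edges are links and no two edges have the same endpoints. -/
def IsSimple : Prop := (∀ e : E, G.IsLink e) ∧ Function.Injective G.ends

/-- The graph is connected. -/
def IsConnected : Prop := ∀ u v : N, G.nodeConn Set.univ u v

/-- Inseparable graph: connected, and for every partition of the edge set into two
nonempty parts the two parts share at least two nodes. -/
def IsInseparable : Prop :=
  G.IsConnected ∧ ∀ A B : Set E, A.Nonempty → B.Nonempty → Disjoint A B →
    A ∪ B = Set.univ → ∃ u v : N, u ≠ v ∧ u ∈ G.nodeSet A ∧ u ∈ G.nodeSet B ∧
      v ∈ G.nodeSet A ∧ v ∈ G.nodeSet B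

/-- A linear class of circles: every member is a circle and no theta subgraph (the
union of three pairwise internally disjoint paths with the same two endpoints)
contains exactly two members of the class. -/
def IsLinearClass (B : Set (Finset E)) : Prop :=
  (∀ C ∈ B, G.IsCircle C) ∧
  ∀ u v : N, ∀ P₁ P₂ P₃ : Finset E,
    G.IsPath P₁ u v → G.IsPath P₂ u v → G.IsPath P₃ u v →
    Disjoint P₁ P₂ → Disjoint P₁ P₃ → Disjoint P₂ P₃ →
    (↑(G.nodesOf P₁) ∩ ↑(G.nodesOf P₂) : Set N) = {u, v} →
    (↑(G.nodesOf P₁) ∩ ↑(G.nodesOf P₃) : Set N) = {u, v} →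
    (↑(G.nodesOf P₂) ∩ ↑(G.nodesOf P₃) : Set N) = {u, v} →
    P₁ ∪ P₂ ∈ B → P₁ ∪ P₃ ∈ B → P₂ ∪ P₃ ∈ B

/-- A balanced edge set with respect to a class `B` of balanced circles:
no half edges, and every circle inside it belongs to `B`. -/
def IsBalancedSet (B : Set (Finset E)) (S : Set E) : Prop :=
  (∀ e ∈ S, G.IsLink e) ∧ ∀ C : Finset E, ↑C ⊆ S → G.IsCircle C → C ∈ B

/-- The number of balanced components of the spanning subgraph `(N, S)`. -/
noncomputable def numBalComponents (B : Set (Finset E)) (S : Set E) : ℕ :=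
  Nat.card ↥{W : Set N | W ∈ G.components S ∧ G.IsBalancedSet B (G.edgesIn S W)}

/-- Frame matroid rank function: `rk S = #N - b(S)`. -/
noncomputable def frameRk [Fintype N] (B : Set (Finset E)) (S : Set E) : ℕ :=
  Fintype.card N - G.numBalComponents B S

/-- Graphic (cycle) matroid rank function: `rk S = #N - c(S)`. -/
noncomputable def graphicRk [Fintype N] (S : Set E) : ℕ :=
  Fintype.card N - G.numComponents S

/-- Graphic matroid rank of a finite edge set, computed inside its own node set
(valid also for infinite graphs): `rk S = #N(S) - c(N(S), S)`. -/
noncomputable def graphicRkOn (S : Finset E) : ℕ :=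
  (G.nodesOf S).card - Nat.card ↥(G.componentsOn ↑S)

/-- Extended lift matroid rank function on `E ⊕ Unit`, where `Sum.inr ()` is the
extra point `e₀`: `rk S = #N - c(S ∩ E)` if `S ⊆ E` is balanced, and
`#N - c(S ∩ E) + 1` if `S` is unbalanced or contains `e₀`. -/
noncomputable def liftRk [Fintype N] (B : Set (Finset E)) (S : Set (E ⊕ Unit)) : ℕ :=
  if G.IsBalancedSet B {e | Sum.inl e ∈ S} ∧ Sum.inr () ∉ S then
    Fintype.card N - G.numComponents {e | Sum.inl e ∈ S}
  else Fintype.card N - G.numComponents {e | Sum.inl e ∈ S} + 1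

/-- Closed sets of the frame matroid (via the rank function; the matroid is finitary). -/
def FrameClosed [Fintype N] (B : Set (Finset E)) (S : Set E) : Prop :=
  ∀ e : E, (∃ S₀ : Finset E, ↑S₀ ⊆ S ∧
    G.frameRk B ↑(insert e S₀) = G.frameRk B ↑S₀) → e ∈ S

/-- Closed sets of the extended lift matroid. -/
def LiftClosed [Fintype N] (B : Set (Finset E)) (S : Set (E ⊕ Unit)) : Prop :=
  ∀ x : E ⊕ Unit, (∃ S₀ : Finset (E ⊕ Unit), ↑S₀ ⊆ S ∧
    G.liftRk B ↑(insert x S₀) = G.liftRk B ↑S₀) → x ∈ S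

/-- The balance-closure of an edge set. -/
def bcl (B : Set (Finset E)) (S : Set E) : Set E :=
  S ∪ {e | ∃ C ∈ B, e ∈ C ∧ ↑C ⊆ S ∪ {e}}

/-- The subgraph of all links, as a graph on the same nodes. -/
def linkGraph : MGraph N {e : E // G.IsLink e} := ⟨fun e => G.ends e.val⟩

/-- Restriction of a class of circles to the subgraph of links. -/
def linkBal (B : Set (Finset E)) : Set (Finset {e : E // G.IsLink e}) :=
  {C | C.image Subtype.val ∈ B}

/-- The subgraph on a subset of the edges (spanning all nodes). -/
def sub (D : Set E) : MGraph N ↥D := ⟨fun f => G.ends f.val⟩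

end MGraph

/-- A graph together with a distinguished class of "balanced" circles.
(It is a biased graph when the class is a linear class.) -/
structure BiasedGraph (N E : Type*) extends MGraph N E where
  Bal : Set (Finset E)

/-- The complete graph on a node set `N`. -/
def completeMGraph (N : Type*) : MGraph N {q : Finset N // q.card = 2} := ⟨Subtype.val⟩

/-- A gain graph with gain group `Γ`: each edge is given by a source, a target
(equal for a half edge) and a gain in the direction from source to target. -/
structure GainGraph (N E : Type*) (Γ : Type*) [Group Γ] extends MGraph N E where
  src : E → N
  tgt : E → N
  gain : E → Γ
  ends_eq : ∀ e : E, ends e = {src e, tgt e}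

namespace GainGraph

variable {N E Γ : Type*} [Group Γ] (Φ : GainGraph N E Γ)

/-- The gain of an edge in the direction from `u` to `v`. -/
noncomputable def ogain (e : E) (u v : N) : Γ :=
  if Φ.src e = u ∧ Φ.tgt e = v then Φ.gain e else (Φ.gain e)⁻¹

/-- A balanced circle of a gain graph: a circle whose gain function is given by a
potential on the nodes (equivalently, the product of its gains along a cyclic
orientation is the identity). -/
def BalancedCircle (C : Finset E) : Prop :=
  Φ.toMGraph.IsCircle C ∧
    ∃ θ : N → Γ, ∀ e ∈ C, Φ.gain e = (θ (Φ.src e))⁻¹ * θ (Φ.tgt e)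

/-- The biased graph `⟨Φ⟩` of a gain graph. -/
def biasedGraph : BiasedGraph N E := { Φ.toMGraph with Bal := {C | Φ.BalancedCircle C} }

end GainGraph

/-- A biased expansion of a graph `Δ` along a projection `p`: `p` is surjective,
preserves endpoints, and every circle of `Δ` with a chosen lift of all but one of
its edges has a unique completion to a balanced circle. -/
def IsBiasedExpansion {N E E' : Type*} (G : MGraph N E) (B : Set (Finset E))
    (Δ : MGraph N E') (p : E → E') : Prop :=
  Function.Surjective p ∧ (∀ e : E, G.ends e = Δ.ends (p e)) ∧
  ∀ C : Finset E', Δ.IsCircle C → ∀ e₀ ∈ C, ∀ s : E' → E,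
    (∀ f ∈ C.erase e₀, p (s f) = f) →
    ∃! t : E, p t = e₀ ∧ (C.erase e₀).image s ∪ {t} ∈ B

/-! ## Axiomatic (synthetic) projective geometry -/

/-- An axiomatic projective geometry: a point set with a line through any two
points, unique when the points are distinct, every line having at least three
points, and satisfying the Veblen–Young axiom. -/
structure ProjGeom (P : Type*) where
  line : P → P → Set P
  line_self : ∀ p : P, line p p = {p}
  line_symm : ∀ p q : P, line p q = line q p
  left_mem_line : ∀ p q : P, p ∈ line p q
  right_mem_line : ∀ p q : P, q ∈ line p q
  line_unique : ∀ p q x y : P, p ≠ q → x ∈ line p q → y ∈ line p q → x ≠ y →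
    line x y = line p q
  exists_third : ∀ p q : P, p ≠ q → ∃ r ∈ line p q, r ≠ p ∧ r ≠ q
  veblen : ∀ p q r s x : P, p ≠ q → r ≠ s → p ≠ r → q ≠ s →
    x ∈ line p q → x ∈ line r s → ∃ y, y ∈ line p r ∧ y ∈ line q s

namespace ProjGeom

variable {P : Type*} (G : ProjGeom P)

/-- A flat (subspace): a line-closed set of points. -/
def IsFlat (t : Set P) : Prop := ∀ p ∈ t, ∀ q ∈ t, G.line p q ⊆ t

/-- The span of a point set: the smallest flat containing it. -/
def span (A : Set P) : Set P := ⋂₀ {t : Set P | G.IsFlat t ∧ A ⊆ t}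

/-- An independent point set: no point is in the span of the others. -/
def Indep (A : Set P) : Prop := ∀ a ∈ A, a ∉ G.span (A \ {a})

/-- The (matroid) rank of a point set: the largest cardinality of a finite
independent subset. -/
noncomputable def rank (A : Set P) : ℕ :=
  sSup {n : ℕ | ∃ B : Finset P, ↑B ⊆ A ∧ G.Indep ↑B ∧ B.card = n}

/-- A hyperplane: a maximal proper flat. -/
def IsHyperplane (h : Set P) : Prop :=
  G.IsFlat h ∧ h ≠ Set.univ ∧ ∀ t : Set P, G.IsFlat t → h ⊆ t → t = h ∨ t = Set.univ

/-- The codimension of a flat: the least number of hyperplanes intersecting in it. -/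
noncomputable def codim (t : Set P) : ℕ :=
  sInf {n : ℕ | ∃ H : Finset (Set P), H.card = n ∧ (∀ h ∈ H, G.IsHyperplane h) ∧
    ⋂₀ ↑H = t}

variable {N : Type*}

/-- A cross-flat with respect to an independent family `ν`: a flat containing
none of the points `ν v`. -/
def crossFlat (ν : N → P) (t : Set P) : Prop := G.IsFlat t ∧ ∀ v : N, ν v ∉ t

/-- The union of all edge lines of the independent family `ν`. -/
def edgeLineUnion (ν : N → P) : Set P :=
  ⋃ (v : N) (w : N) (_ : v ≠ w), G.line (ν v) (ν w)

/-! ### The Menelaean (point) construction for the frame matroid -/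

/-- The underlying graph of the Menelaean construction `Ω(N̂, Ehat)`: a point of `Ehat`
in `N̂` is a half edge, any other point is a link joining the ends of its edge line. -/
noncomputable def menGraph (ν : N → P) (Ehat : Set P)
    (hE : ∀ x ∈ Ehat, x ∉ Set.range ν →
      ∃ pr : N × N, pr.1 ≠ pr.2 ∧ x ∈ G.line (ν pr.1) (ν pr.2)) :
    MGraph N ↥Ehat where
  ends e :=
    if h : (e : P) ∈ Set.range ν then {(show ∃ v : N, ν v = ↑e from h).choose}
    else {(hE e e.2 h).choose.1, (hE e e.2 h).choose.2}

/-- The balanced circles of the Menelaean construction: circles whose point set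
lies in a cross-flat. -/
noncomputable def menBal (ν : N → P) (Ehat : Set P)
    (hE : ∀ x ∈ Ehat, x ∉ Set.range ν →
      ∃ pr : N × N, pr.1 ≠ pr.2 ∧ x ∈ G.line (ν pr.1) (ν pr.2)) :
    Set (Finset ↥Ehat) :=
  {C | (G.menGraph ν Ehat hE).IsCircle C ∧
    ∃ t : Set P, G.crossFlat ν t ∧ ∀ e ∈ C, (e : P) ∈ t}

/-! ### The Cevian (hyperplane) construction for the frame matroid -/

/-- A Cevian arrangement over the point basis `ν`, described by its associated
graph `Γ` and its apex function: a link `e` with endpoints `v, w` has its apex on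
the edge line `v̂ŵ`, off the basis; a half edge at `v` has apex `ν v`. -/
def IsCevian {E : Type*} (ν : N → P) (Γ : MGraph N E) (apex : E → P) : Prop :=
  ∀ e : E,
    (∃ v w : N, v ≠ w ∧ Γ.ends e = ({v, w} : Finset N) ∧
      apex e ∈ G.line (ν v) (ν w) ∧ apex e ∉ Set.range ν) ∨
    (∃ v : N, Γ.ends e = ({v} : Finset N) ∧ apex e = ν v)

/-- The apical hyperplane of an edge of a Cevian arrangement. -/
def cevHyp {E : Type*} (ν : N → P) (Γ : MGraph N E) (apex : E → P) (e : E) : Set P :=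
  if Γ.IsLink e then G.span ((ν '' {u : N | u ∉ Γ.ends e}) ∪ {apex e})
  else G.span (ν '' {u : N | u ∉ Γ.ends e})

/-- The rank function of a Cevian arrangement:
the codimension of the intersection of the corresponding apical hyperplanes. -/
noncomputable def cevRk {E : Type*} (ν : N → P) (Γ : MGraph N E) (apex : E → P)
    (S : Finset E) : ℕ :=
  G.codim (⋂ e ∈ S, G.cevHyp ν Γ apex e)

/-- The balanced circles of a Cevian arrangement:
circles of deficient hyperplane-intersection rank. -/
noncomputable def cevBal {E : Type*} (ν : N → P) (Γ : MGraph N E) (apex : E → P) :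
    Set (Finset E) :=
  {C | Γ.IsCircle C ∧ G.cevRk ν Γ apex C < C.card}

/-! ### The orthographic (point) construction for the lift matroid -/

/-- The projection of the orthographic construction: each point of `Ehat` lies on the
edge line `z'(f)e₀` of a unique edge `f` of `Δ`. -/
noncomputable def orthoProj {E' : Type*} (z' : E' → P) (e₀ : P) (Ehat : Set P)
    (hE : ∀ x ∈ Ehat, ∃ f : E', x ∈ G.line (z' f) e₀) : ↥Ehat → E' :=
  fun e => (hE e e.2).choose

/-- The underlying graph of the orthographic construction `Ω₀(Ehat)`. -/
noncomputable def orthoGraph {E' : Type*} (Δ : MGraph N E') (z' : E' → P) (e₀ : P)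
    (Ehat : Set P) (hE : ∀ x ∈ Ehat, ∃ f : E', x ∈ G.line (z' f) e₀) : MGraph N ↥Ehat :=
  ⟨fun e => Δ.ends (G.orthoProj z' e₀ Ehat hE e)⟩

/-- The balanced circles of the orthographic construction:
circles spanning a cross-flat (a flat not containing `e₀`). -/
noncomputable def orthoBal {E' : Type*} (Δ : MGraph N E') (z' : E' → P) (e₀ : P)
    (Ehat : Set P) (hE : ∀ x ∈ Ehat, ∃ f : E', x ∈ G.line (z' f) e₀) : Set (Finset ↥Ehat) :=
  {C | (G.orthoGraph Δ z' e₀ Ehat hE).IsCircle C ∧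
    e₀ ∉ G.span (Subtype.val '' (↑C : Set ↥Ehat))}

end ProjGeom

/-! ### Synthetic affinographic arrangements -/

/-- A synthetic affinographic arrangement of hyperplanes in the affine geometry
obtained from the projective geometry `G` by deleting the ideal hyperplane `hinf`:
a family of hyperplanes `hP e` (given by their projective completions, with affine
parts `hP e \ hinf`), with parallel classes indexed by the edges of a graph `Δ` with
links only via the surjection `π`; hyperplanes in the class of `f` have common
ideal part `ideal f`, and the matroid of the ideal parts (rank = codimension inside
`hinf`) is the graphic matroid of `Δ`. -/
def IsAffinographic {P N E E' : Type*} [Fintype N] (G : ProjGeom P) (hinf : Set P)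
    (hP : E → Set P) (Δ : MGraph N E') (π : E → E') (ideal : E' → Set P) : Prop :=
  G.IsHyperplane hinf ∧ (∀ f : E', Δ.IsLink f) ∧ Function.Surjective π ∧
  Function.Injective hP ∧ Function.Injective ideal ∧
  (∀ e : E, G.IsHyperplane (hP e) ∧ hP e ≠ hinf ∧ hP e ∩ hinf = ideal (π e)) ∧
  ∀ S : Finset E', Δ.graphicRk (↑S : Set E') = G.codim (hinf ∩ ⋂ f ∈ S, ideal f) - 1

/-- The underlying graph of the biased graph `Ω(A)` of an affinographic
arrangement: each edge of `Δ` is replaced by the edges of its parallel class. -/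
def affinoGraph {N E E' : Type*} (Δ : MGraph N E') (π : E → E') : MGraph N E :=
  ⟨fun e => Δ.ends (π e)⟩

/-- The affine intersection `t_A(S)` of the hyperplanes of `S`. -/
def affInter {P E : Type*} (hinf : Set P) (hP : E → Set P) (S : Set E) : Set P :=
  ⋂ e ∈ S, (hP e \ hinf)

/-- The balanced circles of `Ω(A)`: digons over a single edge of `Δ` are unbalanced;
any other circle is balanced iff its affine intersection is nonempty. -/
def affinoBal {P N E E' : Type*} (_G : ProjGeom P) (hinf : Set P) (hP : E → Set P)
    (Δ : MGraph N E') (π : E → E') : Set (Finset E) :=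
  {C | (affinoGraph Δ π).IsCircle C ∧ ¬(∃ f : E', ∀ e ∈ C, π e = f) ∧
    (affInter hinf hP ↑C).Nonempty}

/-! ### Coordinatized projective spaces -/

/-- The rank of a finite set of points of a coordinatized projective space:
the dimension of the linear span of representative vectors. -/
noncomputable def projRank (F : Type*) {V : Type*} [DivisionRing F] [AddCommGroup V]
    [Module F V] (A : Finset (Projectivization F V)) : ℕ :=
  Module.finrank F ↥(Submodule.span F (Projectivization.rep '' (↑A : Set (Projectivization F V))))

/-- The edge set of the full biased graph `Ω^•`: the edges of `Ω` together with a
new half edge at every node not already supporting one. -/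
def FullE {N E : Type*} (Ω : BiasedGraph N E) : Type _ :=
  E ⊕ {v : N // ∀ e : E, Ω.ends e ≠ ({v} : Finset N)}

/-- The underlying graph of the full biased graph `Ω^•`. -/
def fullGraph {N E : Type*} (Ω : BiasedGraph N E) : MGraph N (FullE Ω) :=
  ⟨Sum.elim Ω.ends (fun v => {v.val})⟩

/-- The balanced circles of the full biased graph `Ω^•` (circles avoid half edges). -/
def fullBal {N E : Type*} (Ω : BiasedGraph N E) : Set (Finset (FullE Ω)) :=
  {C | ∃ C₀ ∈ Ω.Bal, C = C₀.image Sum.inl}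

section Geo
namespace ProjGeom

variable {P : Type*} (G : ProjGeom P)

lemma isFlat_univ : G.IsFlat Set.univ := fun _ _ _ _ _ _ => Set.mem_univ _

lemma isFlat_sInter {T : Set (Set P)} (h : ∀ t ∈ T, G.IsFlat t) : G.IsFlat (⋂₀ T) := by
  intro p hp q hq z hz t ht
  exact h t ht p (hp t ht) q (hq t ht) hz

lemma isFlat_span (A : Set P) : G.IsFlat (G.span A) :=
  G.isFlat_sInter (fun _ ht => ht.1)

lemma subset_span {A : Set P} : A ⊆ G.span A := fun _ ha _ ht => ht.2 ha

lemma span_le {A F : Set P} (hF : G.IsFlat F) (hA : A ⊆ F) : G.span A ⊆ F :=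
  fun _ hx => hx F ⟨hF, hA⟩

lemma span_mono {A B : Set P} (h : A ⊆ B) : G.span A ⊆ G.span B :=
  G.span_le (G.isFlat_span B) (h.trans G.subset_span)

lemma isFlat_singleton (p : P) : G.IsFlat {p} := by
  intro x hx y hy
  simp only [Set.mem_singleton_iff] at hx hy
  subst hx; subst hy
  rw [G.line_self]

lemma span_singleton (p : P) : G.span {p} = {p} :=
  Set.Subset.antisymm (G.span_le (G.isFlat_singleton p) le_rfl) G.subset_span

lemma isFlat_line (p q : P) : G.IsFlat (G.line p q) := by
  intro x hx y hy
  rcases eq_or_ne p q with rfl | hpq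
  · rw [G.line_self] at hx hy
    simp only [Set.mem_singleton_iff] at hx hy
    subst hx; subst hy
    rw [G.line_self]
  rcases eq_or_ne x y with rfl | hxy
  · rw [G.line_self]
    exact Set.singleton_subset_iff.mpr hx
  · rw [G.line_unique p q x y hpq hx hy hxy]

lemma line_subset_flat {F : Set P} (hF : G.IsFlat F) {p q : P} (hp : p ∈ F) (hq : q ∈ F) :
    G.line p q ⊆ F := hF p hp q hq

lemma line_eq_of_mem {p q z : P} (hpq : p ≠ q) (hz : z ∈ G.line p q) (hzp : z ≠ p) :
    G.line p z = G.line p q :=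
  G.line_unique p q p z hpq (G.left_mem_line p q) hz (Ne.symm hzp)

/-- If `z` lies on line `pq` and `z ≠ p` then `q` lies on line `pz`. -/
lemma mem_line_of_mem {p q z : P} (hz : z ∈ G.line p q) (hzp : z ≠ p) :
    q ∈ G.line p z := by
  rcases eq_or_ne p q with rfl | hpq
  · rw [G.line_self] at hz
    exact absurd hz hzp
  · rw [G.line_eq_of_mem hpq hz hzp]
    exact G.right_mem_line p q

lemma span_insert (q : P) (A : Set P) :
    G.span (insert q A) = G.span (insert q (G.span A)) := by
  apply Set.Subset.antisymm
  · exact G.span_mono (Set.insert_subset_insert G.subset_span)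
  · refine G.span_le (G.isFlat_span _) (Set.insert_subset ?_ ?_)
    · exact G.subset_span (Set.mem_insert q A)
    · exact G.span_le (G.isFlat_span _)
        ((Set.subset_insert q A).trans G.subset_span)

/-- The union of lines from `q` to a nonempty flat `F` is the span of `F ∪ {q}`. -/
lemma flat_ext {F : Set P} (hF : G.IsFlat F) (hne : F.Nonempty) (q : P) :
    G.span (insert q F) = ⋃ a ∈ F, G.line q a := by
  by_cases hqF : q ∈ F
  · have h1 : insert q F = F := Set.insert_eq_self.mpr hqF
    have h2 : (⋃ a ∈ F, G.line q a) = F := by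
      apply Set.Subset.antisymm
      · exact Set.iUnion₂_subset fun a ha => G.line_subset_flat hF hqF ha
      · intro a ha
        exact Set.mem_biUnion ha (G.right_mem_line q a)
    rw [h1, h2]
    exact Set.Subset.antisymm (G.span_le hF le_rfl) G.subset_span
  have memR : ∀ c ∈ F, ∀ u ∈ G.line q c, u ∈ ⋃ a ∈ F, G.line q a := by
    intro c hc u hu
    exact Set.mem_biUnion hc hu
  have helper1 : ∀ x b y z : P, x ∈ F → b ∈ F → y ∈ G.line q b → z ∈ G.line x y →
      ∃ c ∈ F, z ∈ G.line q c := by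
    intro x b y z hxF hbF hy hz
    have hqx : q ≠ x := fun h => hqF (h ▸ hxF)
    have hqb : q ≠ b := fun h => hqF (h ▸ hbF)
    rcases eq_or_ne z x with rfl | hzx
    · exact ⟨z, hxF, G.right_mem_line q z⟩
    rcases eq_or_ne y q with rfl | hyq
    · rw [G.line_symm] at hz
      exact ⟨x, hxF, hz⟩
    rcases eq_or_ne z q with rfl | hzq
    · exact ⟨b, hbF, G.left_mem_line z b⟩
    rcases eq_or_ne z y with rfl | hzy
    · exact ⟨b, hbF, hy⟩
    have hxy : x ≠ y := by
      rintro rfl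
      rw [G.line_self] at hz
      exact hzx hz
    rcases eq_or_ne x b with rfl | hxb
    · have h0 : G.line x y = G.line q x :=
        G.line_unique q x x y hqx (G.right_mem_line q x) hy hxy
      exact ⟨x, hxF, h0 ▸ hz⟩
    have hyzx : y ∈ G.line z x := by
      have h := G.mem_line_of_mem hz hzx
      rwa [G.line_symm] at h
    obtain ⟨w, hw1, hw2⟩ := G.veblen z x q b y hzx hqb hzq hxb hyzx hy
    have hwF : w ∈ F := G.line_subset_flat hF hxF hbF hw2
    rcases eq_or_ne w z with rfl | hwz
    · exact ⟨w, hwF, G.right_mem_line q w⟩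
    have hwq : w ≠ q := fun h => hqF (h ▸ hwF)
    have hw1' : w ∈ G.line q z := by rw [G.line_symm]; exact hw1
    have hqwz : G.line q w = G.line q z := G.line_eq_of_mem hzq.symm hw1' hwq
    refine ⟨w, hwF, ?_⟩
    rw [hqwz]
    exact G.right_mem_line q z
  have hflat : G.IsFlat (⋃ a ∈ F, G.line q a) := by
    intro x hx y hy z hz
    simp only [Set.mem_iUnion, exists_prop] at hx hy
    obtain ⟨a, haF, hxa⟩ := hx
    obtain ⟨b, hbF, hyb⟩ := hy
    have hqa : q ≠ a := fun h => hqF (h ▸ haF)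
    have hqb : q ≠ b := fun h => hqF (h ▸ hbF)
    rcases eq_or_ne z x with rfl | hzx
    · exact memR a haF z hxa
    rcases eq_or_ne z y with rfl | hzy
    · exact memR b hbF z hyb
    rcases eq_or_ne z q with rfl | hzq
    · exact memR a haF z (G.left_mem_line z a)
    have hxy : x ≠ y := by
      rintro rfl
      rw [G.line_self] at hz
      exact hzx hz
    by_cases hxF : x ∈ F
    · obtain ⟨c, hcF, hc⟩ := helper1 x b y z hxF hbF hyb hz
      exact memR c hcF _ hc
    by_cases hyF : y ∈ F
    · rw [G.line_symm] at hz
      obtain ⟨c, hcF, hc⟩ := helper1 y a x z hyF haF hxa hz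
      exact memR c hcF _ hc
    rcases eq_or_ne x q with hxq | hxq
    · subst hxq
      have h1 : G.line x y = G.line x b := G.line_eq_of_mem hqb hyb (Ne.symm hxy)
      exact memR b hbF z (h1 ▸ hz)
    rcases eq_or_ne y q with hyq | hyq
    · subst hyq
      rw [G.line_symm] at hz
      have h1 : G.line y x = G.line y a := G.line_eq_of_mem hqa hxa hxy
      exact memR a haF z (h1 ▸ hz)
    have hay : a ≠ y := fun h => hyF (h ▸ haF)
    have hxzy : x ∈ G.line z y := by
      have h1 : G.line z y = G.line x y :=
        G.line_unique x y z y hxy hz (G.right_mem_line x y) hzy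
      rw [h1]
      exact G.left_mem_line x y
    obtain ⟨u, hu1, hu2⟩ := G.veblen q a z y x hqa hzy (Ne.symm hzq) hay hxa hxzy
    obtain ⟨c, hcF, hc⟩ := helper1 a b y u haF hbF hyb hu2
    rcases eq_or_ne u q with huq | huq
    · subst huq
      have hy' : y ∈ G.line u a := by
        have h := G.mem_line_of_mem hu2 hqa
        rwa [G.line_symm] at h
      have h2 : G.line x y = G.line u a := G.line_unique u a x y hqa hxa hy' hxy
      exact memR a haF z (h2 ▸ hz)
    have hqc : q ≠ c := fun h => hqF (h ▸ hcF)
    have h1 : G.line q u = G.line q z := G.line_eq_of_mem (Ne.symm hzq) hu1 huq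
    have h2 : G.line q u = G.line q c := G.line_eq_of_mem hqc hc huq
    refine memR c hcF z ?_
    rw [← h2, h1]
    exact G.right_mem_line q z
  apply Set.Subset.antisymm
  · refine G.span_le hflat (Set.insert_subset ?_ ?_)
    · obtain ⟨a, ha⟩ := hne
      exact memR a ha q (G.left_mem_line q a)
    · intro a ha
      exact memR a ha a (G.right_mem_line q a)
  · refine Set.iUnion₂_subset fun a ha => ?_
    exact G.line_subset_flat (G.isFlat_span _) (G.subset_span (Set.mem_insert q F))
      (G.subset_span (Set.mem_insert_of_mem q ha))

end ProjGeom
end Geo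


namespace ProjGeom
section Nu
variable {P N : Type*} (G : ProjGeom P) {ν : N → P}
variable {hh : True}

lemma not_mem_span_image (hν : Function.Injective ν) (hind : G.Indep (Set.range ν)) {u : N} {A : Set N} (hu : u ∉ A) :
    ν u ∉ G.span (ν '' A) := by
  intro h
  refine hind (ν u) (Set.mem_range_self u) (G.span_mono ?_ h)
  rintro _ ⟨a, ha, rfl⟩
  exact ⟨Set.mem_range_self a, fun hh => hu (by rwa [hν hh] at ha)⟩

lemma line_nu_subset {v w : N} {A : Set N} (hv : v ∈ A) (hw : w ∈ A) :
    G.line (ν v) (ν w) ⊆ G.span (ν '' A) :=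
  G.line_subset_flat (G.isFlat_span _) (G.subset_span ⟨v, hv, rfl⟩) (G.subset_span ⟨w, hw, rfl⟩)

lemma line_nu_subset' (v w : N) :
    G.line (ν v) (ν w) ⊆ G.span (ν '' {v, w}) :=
  G.line_subset_flat (G.isFlat_span _) (G.subset_span ⟨v, Or.inl rfl, rfl⟩)
    (G.subset_span ⟨w, Or.inr rfl, rfl⟩)

lemma basis_not_on_line (hν : Function.Injective ν) (hind : G.Indep (Set.range ν)) {u v w : N} (huv : u ≠ v) (huw : u ≠ w) :
    ν u ∉ G.line (ν v) (ν w) := by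
  intro h
  exact G.not_mem_span_image hν hind (by simp [huv, huw] : u ∉ ({v, w} : Set N))
    (G.line_nu_subset' v w h)

lemma not_range_of_on_line (hν : Function.Injective ν) (hind : G.Indep (Set.range ν)) {v w : N} {r : P} (hvw : v ≠ w) (hr : r ∈ G.line (ν v) (ν w))
    (h1 : r ≠ ν v) (h2 : r ≠ ν w) : r ∉ Set.range ν := by
  rintro ⟨u, rfl⟩
  rcases eq_or_ne u v with rfl | huv
  · exact h1 rfl
  rcases eq_or_ne u w with rfl | huw
  · exact h2 rfl
  exact G.basis_not_on_line hν hind huv huw hr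

lemma pair_unique_aux (hν : Function.Injective ν) (hind : G.Indep (Set.range ν)) {v w v' w' : N} {z : P}
    (hz : z ∈ G.line (ν v) (ν w)) (hz' : z ∈ G.line (ν v') (ν w'))
    (hzr : z ∉ Set.range ν) (h1 : w' ≠ v) (h2 : w' ≠ w) (h3 : w' ≠ v') : False := by
  have hzv' : z ≠ ν v' := fun h => hzr (h ▸ Set.mem_range_self v')
  have hw'mem : ν w' ∈ G.line (ν v') z := G.mem_line_of_mem hz' hzv'
  have hsub : G.line (ν v') z ⊆ G.span (ν '' {v, w, v'}) := by
    refine G.line_subset_flat (G.isFlat_span _) (G.subset_span ⟨v', by simp, rfl⟩) ?_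
    exact G.line_nu_subset (by simp : v ∈ ({v, w, v'} : Set N))
      (by simp : w ∈ ({v, w, v'} : Set N)) hz
  exact G.not_mem_span_image hν hind (by simp [h1, h2, h3]) (hsub hw'mem)

/-- A non-basis point lies on at most one edge line. -/
lemma pair_unique (hν : Function.Injective ν) (hind : G.Indep (Set.range ν)) {v w v' w' : N} {z : P} (hvw : v ≠ w) (hv'w' : v' ≠ w')
    (hz : z ∈ G.line (ν v) (ν w)) (hz' : z ∈ G.line (ν v') (ν w'))
    (hzr : z ∉ Set.range ν) : ({v, w} : Finset N) = {v', w'} := by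
  by_contra hne
  have hz'' : z ∈ G.line (ν w') (ν v') := by rwa [G.line_symm] at hz'
  by_cases hv' : v' = v ∨ v' = w
  · -- then w' ∉ {v,w} (else pairs equal)
    have hw' : ¬(w' = v ∨ w' = w) := by
      intro hw'
      apply hne
      rcases hv' with h | h <;> rcases hw' with h2 | h2
      · exact absurd (h.trans h2.symm) hv'w'
      · rw [h, h2]
      · rw [h, h2]; exact Finset.pair_comm v w
      · exact absurd (h.trans h2.symm) hv'w'
    push_neg at hw'
    exact G.pair_unique_aux hν hind hz hz' hzr hw'.1 hw'.2 (Ne.symm hv'w')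
  · push_neg at hv'
    exact G.pair_unique_aux hν hind hz hz'' hzr hv'.1 hv'.2 hv'w'

/-- Key extension step: adjoining a point of an edge line `ν a ν c` with `a` outside
the supporting node set keeps the span free of basis points. -/
lemma ext_avoid (hν : Function.Injective ν) (hind : G.Indep (Set.range ν)) {F : Set P} (hF : G.IsFlat F) (hne : F.Nonempty)
    (hav : ∀ u : N, ν u ∉ F) {W : Set N} (hFW : F ⊆ G.span (ν '' W))
    {a c : N} (haW : a ∉ W) (hcW : c ∈ W) {x₁ : P}
    (hx₁ : x₁ ∈ G.line (ν a) (ν c)) (hx₁r : x₁ ∉ Set.range ν) :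
    ∀ u : N, ν u ∉ G.span (insert x₁ F) := by
  have hac : a ≠ c := fun h => haW (h ▸ hcW)
  have hx₁a : x₁ ≠ ν a := fun h => hx₁r (h ▸ Set.mem_range_self a)
  have hx₁c : x₁ ≠ ν c := fun h => hx₁r (h ▸ Set.mem_range_self c)
  intro u hu
  rw [G.flat_ext hF hne x₁] at hu
  simp only [Set.mem_iUnion, exists_prop] at hu
  obtain ⟨α, hαF, huα⟩ := hu
  have hx₁u : x₁ ≠ ν u := fun h => hx₁r (h ▸ Set.mem_range_self u)
  have hαu : α ≠ ν u := fun h => hav u (h ▸ hαF)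
  have hx₁α : x₁ ≠ α := by
    rintro rfl
    rw [G.line_self] at huα
    exact hx₁u (huα.symm)
  rcases eq_or_ne u a with rfl | hua
  · -- α ∈ line x₁ (ν a); line (ν a) x₁ = line (ν a) (ν c)
    have h1 : α ∈ G.line (ν u) x₁ := by
      have h := G.mem_line_of_mem huα (Ne.symm hx₁u)
      rwa [G.line_symm] at h
    have h2 : G.line (ν u) x₁ = G.line (ν u) (ν c) :=
      G.line_eq_of_mem (hν.ne hac) hx₁ hx₁a
    rw [h2] at h1
    -- α ∈ line (ν u) (ν c), α ≠ ν c, so ν u ∈ line (ν c) α ⊆ span (ν '' W)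
    have hανc : α ≠ ν c := fun h => hav c (h ▸ hαF)
    have h3 : α ∈ G.line (ν c) (ν u) := by rwa [G.line_symm] at h1
    have h4 : ν u ∈ G.line (ν c) α := G.mem_line_of_mem h3 hανc
    have h5 : G.line (ν c) α ⊆ G.span (ν '' W) :=
      G.line_subset_flat (G.isFlat_span _) (G.subset_span ⟨c, hcW, rfl⟩) (hFW hαF)
    exact G.not_mem_span_image hν hind haW (h5 h4)
  · -- u ≠ a: x₁ ∈ line (ν u) α ⊆ T, then ν a ∈ line (ν c) x₁ ⊆ T
    set T := G.span (ν '' (insert u W)) with hT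
    have hαT : α ∈ T := (G.span_mono (Set.image_mono (Set.subset_insert u W))) (hFW hαF)
    have huT : ν u ∈ T := G.subset_span ⟨u, Set.mem_insert u W, rfl⟩
    have hx₁T : x₁ ∈ T := by
      have h1 : G.line (ν u) α = G.line x₁ α :=
        G.line_unique x₁ α (ν u) α hx₁α huα (G.right_mem_line x₁ α) (Ne.symm hαu)
      have : x₁ ∈ G.line (ν u) α := h1 ▸ G.left_mem_line x₁ α
      exact G.line_subset_flat (G.isFlat_span _) huT hαT this
    have hcT : ν c ∈ T := G.subset_span ⟨c, Set.mem_insert_of_mem u hcW, rfl⟩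
    have h2 : ν a ∈ G.line (ν c) x₁ := by
      have h3 : x₁ ∈ G.line (ν c) (ν a) := by rwa [G.line_symm] at hx₁
      exact G.mem_line_of_mem h3 hx₁c
    have h4 : ν a ∈ T := G.line_subset_flat (G.isFlat_span _) hcT hx₁T h2
    refine G.not_mem_span_image hν hind ?_ h4
    simp only [Set.mem_insert_iff]
    push_neg
    exact ⟨Ne.symm hua, haW⟩

/-- The synthetic Menelaus step for a triangle. -/
lemma veblen_tri (hν : Function.Injective ν) {a b c : N} (hab : a ≠ b) (hac : a ≠ c) (hbc : b ≠ c)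
    {x₁ y : P} (hx₁ : x₁ ∈ G.line (ν a) (ν c)) (hx₁r : x₁ ∉ Set.range ν)
    (hy : y ∈ G.line (ν c) (ν b)) (hyr : y ∉ Set.range ν) (hxy : x₁ ≠ y) :
    ∃ t, t ∈ G.line x₁ y ∧ t ∈ G.line (ν a) (ν b) := by
  have hx₁a : x₁ ≠ ν a := fun h => hx₁r (h ▸ Set.mem_range_self a)
  have hyb : y ≠ ν b := fun h => hyr (h ▸ Set.mem_range_self b)
  have h1 : ν c ∈ G.line x₁ (ν a) := by
    have h := G.mem_line_of_mem hx₁ hx₁a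
    rwa [G.line_symm] at h
  have h2 : ν c ∈ G.line y (ν b) := by
    have h3 : y ∈ G.line (ν b) (ν c) := by rwa [G.line_symm] at hy
    have h := G.mem_line_of_mem h3 hyb
    rwa [G.line_symm] at h
  exact G.veblen x₁ (ν a) y (ν b) (ν c) hx₁a hyb hxy (hν.ne hab) h1 h2

end Nu
end ProjGeom


private noncomputable abbrev subtypeClassicalDecEq {α : Sort*} (p : α → Prop) :
    DecidableEq (Subtype p) :=
  fun _ _ => Classical.propDecidable _

attribute [local instance 2000] subtypeClassicalDecEq

section Graph

/-- Transfer a circle along an injective, ends-preserving map of edges. -/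
lemma MGraph.IsCircle.transfer {N E₁ E₂ : Type*} {G₁ : MGraph N E₁} {G₂ : MGraph N E₂}
    {C : Finset E₁} (h : G₁.IsCircle C) {φ : E₁ → E₂} (hinj : Set.InjOn φ ↑C)
    (hed : ∀ e ∈ C, G₂.ends (φ e) = G₁.ends e) : G₂.IsCircle (C.image φ) := by
  obtain ⟨hne, hlk, hconn, hdeg⟩ := h
  have hnodes : G₂.nodesOf (C.image φ) = G₁.nodesOf C := by
    unfold MGraph.nodesOf
    apply Finset.ext
    intro w
    simp only [Finset.mem_biUnion, Finset.mem_image]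
    constructor
    · rintro ⟨e', ⟨e, he, rfl⟩, hw⟩
      exact ⟨e, he, (hed e he) ▸ hw⟩
    · rintro ⟨e, he, hw⟩
      exact ⟨φ e, ⟨e, he, rfl⟩, (hed e he).symm ▸ hw⟩
  refine ⟨hne.image φ, ?_, ?_, ?_⟩
  · rintro e' he'
    obtain ⟨e, he, rfl⟩ := Finset.mem_image.mp he'
    unfold MGraph.IsLink
    rw [hed e he]
    exact hlk e he
  · intro a ha b hb
    rw [Finset.coe_image] at ha hb
    obtain ⟨e, he, rfl⟩ := ha
    obtain ⟨f, hf, rfl⟩ := hb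
    refine Relation.ReflTransGen.lift' φ ?_ _ _ (hconn e he f hf)
    rintro y z ⟨hy, hz, v, hv1, hv2⟩
    refine Relation.ReflTransGen.single ⟨?_, ?_, v, ?_, ?_⟩
    · rw [Finset.coe_image]; exact Set.mem_image_of_mem φ hy
    · rw [Finset.coe_image]; exact Set.mem_image_of_mem φ hz
    · rw [hed y hy]; exact hv1
    · rw [hed z hz]; exact hv2
  · intro v hv
    rw [hnodes] at hv
    have h2 := hdeg v hv
    unfold MGraph.degreeIn at h2 ⊢
    rw [Finset.filter_image]
    rw [Finset.card_image_of_injOn (hinj.mono (Finset.coe_subset.mpr (Finset.filter_subset _ _)))]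
    rw [← h2]
    congr 1
    apply Finset.filter_congr
    intro e he
    rw [hed e he]

variable {N : Type*}

lemma complete_ends (e : {q : Finset N // q.card = 2}) : (completeMGraph N).ends e = e.val := rfl

lemma mem_nodesOf_complete {S : Finset {q : Finset N // q.card = 2}} {v : N} :
    v ∈ (completeMGraph N).nodesOf S ↔ ∃ e ∈ S, v ∈ e.val := by
  unfold MGraph.nodesOf
  simp [complete_ends]

/-- In a circle of the complete graph, the edges at a node `v` are exactly two given ones. -/
lemma circle_edges_at {C : Finset {q : Finset N // q.card = 2}}
    (hC : (completeMGraph N).IsCircle C) {v : N} {f₁ f₂ : {q : Finset N // q.card = 2}}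
    (h₁ : f₁ ∈ C) (h₂ : f₂ ∈ C) (hne : f₁ ≠ f₂) (hv₁ : v ∈ f₁.val) (hv₂ : v ∈ f₂.val) :
    ∀ g ∈ C, v ∈ g.val → g = f₁ ∨ g = f₂ := by
  have hvN : v ∈ (completeMGraph N).nodesOf C := mem_nodesOf_complete.mpr ⟨f₁, h₁, hv₁⟩
  have hdeg := hC.2.2.2 v hvN
  unfold MGraph.degreeIn at hdeg
  have hsub : ({f₁, f₂} : Finset _) ⊆ C.filter (fun e => v ∈ (completeMGraph N).ends e) := by
    intro g hg
    rcases Finset.mem_insert.mp hg with rfl | hg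
    · exact Finset.mem_filter.mpr ⟨h₁, hv₁⟩
    · rw [Finset.mem_singleton.mp hg]
      exact Finset.mem_filter.mpr ⟨h₂, hv₂⟩
  have heq := Finset.eq_of_subset_of_card_le hsub (by rw [hdeg, Finset.card_pair hne])
  intro g hg hvg
  have : g ∈ ({f₁, f₂} : Finset _) := by
    rw [heq]
    exact Finset.mem_filter.mpr ⟨hg, hvg⟩
  simpa using this

lemma circle_second_edge {C : Finset {q : Finset N // q.card = 2}}
    (hC : (completeMGraph N).IsCircle C) {v : N} {f : {q : Finset N // q.card = 2}}
    (hf : f ∈ C) (hv : v ∈ f.val) : ∃ g ∈ C, g ≠ f ∧ v ∈ g.val := by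
  have hvN : v ∈ (completeMGraph N).nodesOf C := mem_nodesOf_complete.mpr ⟨f, hf, hv⟩
  have hdeg := hC.2.2.2 v hvN
  unfold MGraph.degreeIn at hdeg
  obtain ⟨g, hg, hgf⟩ := Finset.exists_mem_ne (by rw [hdeg]; norm_num) f
  obtain ⟨hgC, hgv⟩ := Finset.mem_filter.mp hg
  exact ⟨g, hgC, hgf, hgv⟩

lemma pair_decomp {s : Finset N} (h2 : s.card = 2) {a : N} (ha : a ∈ s) :
    ∃ c, c ≠ a ∧ s = {a, c} := by
  obtain ⟨x, y, hxy, rfl⟩ := Finset.card_eq_two.mp h2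
  rcases Finset.mem_insert.mp ha with rfl | ha'
  · exact ⟨y, hxy.symm, rfl⟩
  · rw [Finset.mem_singleton.mp ha']
    exact ⟨x, hxy, Finset.pair_comm x y⟩

end Graph


section Surgery
variable {N : Type*}

/-- If the chord `{c,b}` belongs to the circle, the circle is the triangle. -/
lemma triangle_closure {C : Finset {q : Finset N // q.card = 2}}
    (hC : (completeMGraph N).IsCircle C) {e₀ e₁ e₂ : {q : Finset N // q.card = 2}} {a b c : N}
    (he₀ : e₀ ∈ C) (he₁ : e₁ ∈ C) (he₂ : e₂ ∈ C) (hne01 : e₀ ≠ e₁)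
    (hv₀ : e₀.val = {a, b}) (hv₁ : e₁.val = {a, c}) (hv₂ : e₂.val = {c, b})
    (hab : a ≠ b) (hac : a ≠ c) (hbc : b ≠ c) :
    C = {e₀, e₁, e₂} := by
  have ha0 : a ∈ e₀.val := by simp [hv₀]
  have hb0 : b ∈ e₀.val := by simp [hv₀]
  have ha1 : a ∈ e₁.val := by simp [hv₁]
  have hc1 : c ∈ e₁.val := by simp [hv₁]
  have hb2 : b ∈ e₂.val := by simp [hv₂]
  have hc2 : c ∈ e₂.val := by simp [hv₂]
  have h02 : e₀ ≠ e₂ := by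
    intro h
    rw [h, hv₂] at ha0
    simp only [Finset.mem_insert, Finset.mem_singleton] at ha0
    tauto
  have h12 : e₁ ≠ e₂ := by
    intro h
    rw [h, hv₂] at ha1
    simp only [Finset.mem_insert, Finset.mem_singleton] at ha1
    tauto
  have hedgea := circle_edges_at hC he₀ he₁ hne01 ha0 ha1
  have hedgeb := circle_edges_at hC he₀ he₂ h02 hb0 hb2
  have hedgec := circle_edges_at hC he₁ he₂ h12 hc1 hc2
  apply Finset.Subset.antisymm
  · intro f hf
    have hrt := hC.2.2.1 e₀ (Finset.mem_coe.mpr he₀) f (Finset.mem_coe.mpr hf)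
    have key : ∀ {g}, Relation.ReflTransGen
        (fun x y => x ∈ (↑C : Set _) ∧ y ∈ (↑C : Set _) ∧
          ∃ v : N, v ∈ (completeMGraph N).ends x ∧ v ∈ (completeMGraph N).ends y) e₀ g →
        g ∈ ({e₀, e₁, e₂} : Finset {q : Finset N // q.card = 2}) := by
      intro g h
      induction h with
      | refl => simp
      | tail _ hrel ih =>
        rename_i y z _
        obtain ⟨hy, hz, v, hv1, hv2⟩ := hrel
        have hzC : z ∈ C := Finset.mem_coe.mp hz
        have hv2' : v ∈ z.val := hv2
        simp only [Finset.mem_insert, Finset.mem_singleton] at ih ⊢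
        rcases ih with rfl | rfl | rfl
        · have : v ∈ y.val := hv1
          rw [hv₀] at this
          simp only [Finset.mem_insert, Finset.mem_singleton] at this
          rcases this with rfl | rfl
          · rcases hedgea z hzC hv2' with rfl | rfl <;> tauto
          · rcases hedgeb z hzC hv2' with rfl | rfl <;> tauto
        · have : v ∈ y.val := hv1
          rw [hv₁] at this
          simp only [Finset.mem_insert, Finset.mem_singleton] at this
          rcases this with rfl | rfl
          · rcases hedgea z hzC hv2' with rfl | rfl <;> tauto
          · rcases hedgec z hzC hv2' with rfl | rfl <;> tauto
        · have : v ∈ y.val := hv1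
          rw [hv₂] at this
          simp only [Finset.mem_insert, Finset.mem_singleton] at this
          rcases this with rfl | rfl
          · rcases hedgec z hzC hv2' with rfl | rfl <;> tauto
          · rcases hedgeb z hzC hv2' with rfl | rfl <;> tauto
    exact key hrt
  · intro f hf
    simp only [Finset.mem_insert, Finset.mem_singleton] at hf
    rcases hf with rfl | rfl | rfl <;> assumption

/-- Replacing the path `b–a–c` of a circle by the chord `{c,b}` yields a circle. -/
lemma circle_surgery {C : Finset {q : Finset N // q.card = 2}}
    (hC : (completeMGraph N).IsCircle C) {e₀ e₁ e₂ : {q : Finset N // q.card = 2}} {a b c : N}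
    (he₀ : e₀ ∈ C) (he₁ : e₁ ∈ C) (hne01 : e₀ ≠ e₁)
    (hv₀ : e₀.val = {a, b}) (hv₁ : e₁.val = {a, c}) (hv₂ : e₂.val = {c, b})
    (hab : a ≠ b) (hac : a ≠ c) (hbc : b ≠ c) (he₂ : e₂ ∉ C) :
    (completeMGraph N).IsCircle (insert e₂ ((C.erase e₀).erase e₁)) := by
  classical
  set D := (C.erase e₀).erase e₁ with hD
  have ha0 : a ∈ e₀.val := by simp [hv₀]
  have hb0 : b ∈ e₀.val := by simp [hv₀]
  have ha1 : a ∈ e₁.val := by simp [hv₁]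
  have hc1 : c ∈ e₁.val := by simp [hv₁]
  have hb2 : b ∈ e₂.val := by simp [hv₂]
  have hc2 : c ∈ e₂.val := by simp [hv₂]
  have hb1 : b ∉ e₁.val := by simp [hv₁]; exact ⟨Ne.symm hab, hbc⟩
  have hc0 : c ∉ e₀.val := by simp [hv₀]; exact ⟨Ne.symm hac, Ne.symm hbc⟩
  have ha2 : a ∉ e₂.val := by simp [hv₂]; exact ⟨hac, hab⟩
  have hDsub : D ⊆ C := (Finset.erase_subset _ _).trans (Finset.erase_subset _ _)
  have hmemD : ∀ {f}, f ∈ D ↔ f ∈ C ∧ f ≠ e₀ ∧ f ≠ e₁ := by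
    intro f
    rw [hD, Finset.mem_erase, Finset.mem_erase]
    tauto
  have hedgea := circle_edges_at hC he₀ he₁ hne01 ha0 ha1
  have haD : ∀ f ∈ D, a ∉ f.val := by
    intro f hf hvf
    obtain ⟨hfC, hf0, hf1⟩ := hmemD.mp hf
    rcases hedgea f hfC hvf with rfl | rfl
    · exact hf0 rfl
    · exact hf1 rfl
  -- second edges at b and c
  obtain ⟨fb, hfbC, hfb0, hfbv⟩ := circle_second_edge hC he₀ hb0
  have hfb1 : fb ≠ e₁ := fun h => hb1 (h ▸ hfbv)
  have hfbD : fb ∈ D := hmemD.mpr ⟨hfbC, hfb0, hfb1⟩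
  obtain ⟨fc, hfcC, hfc1, hfcv⟩ := circle_second_edge hC he₁ hc1
  have hfc0 : fc ≠ e₀ := fun h => hc0 (h ▸ hfcv)
  have hfcD : fc ∈ D := hmemD.mpr ⟨hfcC, hfc0, hfc1⟩
  have he₂D : e₂ ∉ D := fun h => he₂ (hDsub h)
  have he₂fb : e₂ ≠ fb := fun h => he₂ (h ▸ hfbC)
  have he₂fc : e₂ ≠ fc := fun h => he₂ (h ▸ hfcC)
  have hedgeb := circle_edges_at hC he₀ hfbC (Ne.symm hfb0) hb0 hfbv
  have hedgec := circle_edges_at hC he₁ hfcC (Ne.symm hfc1) hc1 hfcv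
  refine ⟨Finset.insert_nonempty _ _, fun e _ => e.2, ?_, ?_⟩
  · -- connectivity
    set ρ : {q : Finset N // q.card = 2} → {q : Finset N // q.card = 2} :=
      fun g => if g = e₀ ∨ g = e₁ then e₂ else g with hρ
    have hmemC' : ∀ {f}, f ∈ insert e₂ D ↔ f = e₂ ∨ f ∈ D := by
      intro f; rw [Finset.mem_insert]
    have hρmem : ∀ g ∈ C, ρ g ∈ insert e₂ D := by
      intro g hg
      by_cases h : g = e₀ ∨ g = e₁
      · rw [hρ]; simp only [if_pos h]; exact Finset.mem_insert_self _ _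
      · rw [hρ]; simp only [if_neg h]
        push_neg at h
        exact Finset.mem_insert_of_mem (hmemD.mpr ⟨hg, h.1, h.2⟩)
    have step : ∀ g h, (g ∈ (↑C : Set _) ∧ h ∈ (↑C : Set _) ∧
        ∃ v : N, v ∈ (completeMGraph N).ends g ∧ v ∈ (completeMGraph N).ends h) →
        Relation.ReflTransGen (fun x y => x ∈ (↑(insert e₂ D) : Set _) ∧
          y ∈ (↑(insert e₂ D) : Set _) ∧
          ∃ v : N, v ∈ (completeMGraph N).ends x ∧ v ∈ (completeMGraph N).ends y) (ρ g) (ρ h) := by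
      rintro g h ⟨hg, hh, v, hv1, hv2⟩
      have hgC : g ∈ C := Finset.mem_coe.mp hg
      have hhC : h ∈ C := Finset.mem_coe.mp hh
      have hv1' : v ∈ g.val := hv1
      have hv2' : v ∈ h.val := hv2
      by_cases hg01 : g = e₀ ∨ g = e₁ <;> by_cases hh01 : h = e₀ ∨ h = e₁
      · rw [hρ]; simp only [if_pos hg01, if_pos hh01]
        exact Relation.ReflTransGen.refl
      · -- ρ g = e₂, ρ h = h ∈ D
        have hhD : h ∈ D := by push_neg at hh01; exact hmemD.mpr ⟨hhC, hh01.1, hh01.2⟩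
        have hve₂ : v ∈ e₂.val := by
          rcases hg01 with rfl | rfl
          · rw [hv₀] at hv1'
            simp only [Finset.mem_insert, Finset.mem_singleton] at hv1'
            rcases hv1' with rfl | rfl
            · exfalso; rcases hedgea h hhC hv2' with rfl | rfl <;> tauto
            · exact hb2
          · rw [hv₁] at hv1'
            simp only [Finset.mem_insert, Finset.mem_singleton] at hv1'
            rcases hv1' with rfl | rfl
            · exfalso; rcases hedgea h hhC hv2' with rfl | rfl <;> tauto
            · exact hc2
        rw [hρ]; simp only [if_pos hg01, if_neg hh01]
        exact Relation.ReflTransGen.single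
          ⟨Finset.mem_coe.mpr (Finset.mem_insert_self _ _),
           Finset.mem_coe.mpr (Finset.mem_insert_of_mem hhD), v, hve₂, hv2⟩
      · -- symmetric
        have hgD : g ∈ D := by push_neg at hg01; exact hmemD.mpr ⟨hgC, hg01.1, hg01.2⟩
        have hve₂ : v ∈ e₂.val := by
          rcases hh01 with rfl | rfl
          · rw [hv₀] at hv2'
            simp only [Finset.mem_insert, Finset.mem_singleton] at hv2'
            rcases hv2' with rfl | rfl
            · exfalso; rcases hedgea g hgC hv1' with rfl | rfl <;> tauto
            · exact hb2
          · rw [hv₁] at hv2'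
            simp only [Finset.mem_insert, Finset.mem_singleton] at hv2'
            rcases hv2' with rfl | rfl
            · exfalso; rcases hedgea g hgC hv1' with rfl | rfl <;> tauto
            · exact hc2
        rw [hρ]; simp only [if_neg hg01, if_pos hh01]
        exact Relation.ReflTransGen.single
          ⟨Finset.mem_coe.mpr (Finset.mem_insert_of_mem hgD),
           Finset.mem_coe.mpr (Finset.mem_insert_self _ _), v, hv1, hve₂⟩
      · have hgD : g ∈ D := by push_neg at hg01; exact hmemD.mpr ⟨hgC, hg01.1, hg01.2⟩
        have hhD : h ∈ D := by push_neg at hh01; exact hmemD.mpr ⟨hhC, hh01.1, hh01.2⟩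
        rw [hρ]; simp only [if_neg hg01, if_neg hh01]
        exact Relation.ReflTransGen.single
          ⟨Finset.mem_coe.mpr (Finset.mem_insert_of_mem hgD),
           Finset.mem_coe.mpr (Finset.mem_insert_of_mem hhD), v, hv1, hv2⟩
    intro f hf f' hf'
    have hex : ∀ {x}, x ∈ (↑(insert e₂ D) : Set _) → ∃ g ∈ C, ρ g = x := by
      intro x hx
      rcases hmemC'.mp (Finset.mem_coe.mp hx) with rfl | hxD
      · refine ⟨e₀, he₀, ?_⟩
        rw [hρ]; simp
      · obtain ⟨hxC, hx0, hx1⟩ := hmemD.mp hxD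
        refine ⟨x, hxC, ?_⟩
        rw [hρ]; simp [hx0, hx1]
    obtain ⟨g, hgC, rfl⟩ := hex hf
    obtain ⟨g', hg'C, rfl⟩ := hex hf'
    exact Relation.ReflTransGen.lift' ρ step _ _
      (hC.2.2.1 g (Finset.mem_coe.mpr hgC) g' (Finset.mem_coe.mpr hg'C))
  · -- degrees
    intro v hv
    have hva : v ≠ a := by
      rintro rfl
      rw [mem_nodesOf_complete] at hv
      obtain ⟨e, he, hve⟩ := hv
      rcases Finset.mem_insert.mp he with rfl | heD
      · exact ha2 hve
      · exact haD e heD hve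
    unfold MGraph.degreeIn
    by_cases hvb : v = b
    · subst hvb
      have : (insert e₂ D).filter (fun e => v ∈ (completeMGraph N).ends e) = {e₂, fb} := by
        apply Finset.ext
        intro g
        simp only [Finset.mem_filter, Finset.mem_insert, Finset.mem_singleton]
        constructor
        · rintro ⟨hg, hvg⟩
          rcases hg with rfl | hgD
          · exact Or.inl rfl
          · obtain ⟨hgC, hg0, _⟩ := hmemD.mp hgD
            rcases hedgeb g hgC hvg with rfl | rfl
            · exact absurd rfl hg0
            · exact Or.inr rfl
        · rintro (rfl | rfl)
          · exact ⟨Or.inl rfl, hb2⟩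
          · exact ⟨Or.inr hfbD, hfbv⟩
      rw [this, Finset.card_pair he₂fb]
    by_cases hvc : v = c
    · subst hvc
      have : (insert e₂ D).filter (fun e => v ∈ (completeMGraph N).ends e) = {e₂, fc} := by
        apply Finset.ext
        intro g
        simp only [Finset.mem_filter, Finset.mem_insert, Finset.mem_singleton]
        constructor
        · rintro ⟨hg, hvg⟩
          rcases hg with rfl | hgD
          · exact Or.inl rfl
          · obtain ⟨hgC, _, hg1⟩ := hmemD.mp hgD
            rcases hedgec g hgC hvg with rfl | rfl
            · exact absurd rfl hg1
            · exact Or.inr rfl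
        · rintro (rfl | rfl)
          · exact ⟨Or.inl rfl, hc2⟩
          · exact ⟨Or.inr hfcD, hfcv⟩
      rw [this, Finset.card_pair he₂fc]
    · -- v ∉ {a, b, c}
      have hvC : v ∈ (completeMGraph N).nodesOf C := by
        rw [mem_nodesOf_complete] at hv ⊢
        obtain ⟨e, he, hve⟩ := hv
        rcases Finset.mem_insert.mp he with rfl | heD
        · exfalso
          rw [hv₂] at hve
          simp only [Finset.mem_insert, Finset.mem_singleton] at hve
          tauto
        · exact ⟨e, hDsub heD, hve⟩
      have heq : (insert e₂ D).filter (fun e => v ∈ (completeMGraph N).ends e) =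
          C.filter (fun e => v ∈ (completeMGraph N).ends e) := by
        apply Finset.ext
        intro g
        simp only [Finset.mem_filter, Finset.mem_insert]
        constructor
        · rintro ⟨hg, hvg⟩
          rcases hg with rfl | hgD
          · exfalso
            have : v ∈ g.val := hvg
            rw [hv₂] at this
            simp only [Finset.mem_insert, Finset.mem_singleton] at this
            tauto
          · exact ⟨hDsub hgD, hvg⟩
        · rintro ⟨hgC, hvg⟩
          have hvg' : v ∈ g.val := hvg
          have hg0 : g ≠ e₀ := by
            rintro rfl
            rw [hv₀] at hvg'
            simp only [Finset.mem_insert, Finset.mem_singleton] at hvg'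
            tauto
          have hg1 : g ≠ e₁ := by
            rintro rfl
            rw [hv₁] at hvg'
            simp only [Finset.mem_insert, Finset.mem_singleton] at hvg'
            tauto
          exact ⟨Or.inr (hmemD.mpr ⟨hgC, hg0, hg1⟩), hvg⟩
      rw [heq]
      exact hC.2.2.2 v hvC

end Surgery


section Master
open ProjGeom

/-- Master lemma: span of lifts along a broken circle avoids the basis,
stays over the circle's nodes, and meets the missing edge line. -/
lemma master {P N : Type*} (G : ProjGeom P) {ν : N → P} (hν : Function.Injective ν)
    (hind : G.Indep (Set.range ν)) :
    ∀ n : ℕ, ∀ C : Finset {q : Finset N // q.card = 2}, C.card = n →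
    (completeMGraph N).IsCircle C → ∀ e₀ ∈ C, ∀ a b : N, e₀.val = {a, b} →
    ∀ x : {q : Finset N // q.card = 2} → P,
    (∀ f ∈ C.erase e₀, ∀ v w : N, f.val = {v, w} →
       x f ∈ G.line (ν v) (ν w) ∧ x f ∉ Set.range ν) →
    (∀ u : N, ν u ∉ G.span ↑((C.erase e₀).image x)) ∧
    G.span ↑((C.erase e₀).image x) ⊆
      G.span (ν '' ↑((completeMGraph N).nodesOf (C.erase e₀))) ∧
    ∃ t, t ∈ G.span ↑((C.erase e₀).image x) ∧ t ∈ G.line (ν a) (ν b) := by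
  intro n
  induction n using Nat.strong_induction_on with
  | _ n IH =>
  intro C hcard hC e₀ he₀ a b hv₀ x hx
  have hab : a ≠ b := by
    rintro rfl
    have h2 := e₀.2
    rw [hv₀] at h2
    simp at h2
  have ha0 : a ∈ e₀.val := by simp [hv₀]
  have hb0 : b ∈ e₀.val := by simp [hv₀]
  obtain ⟨e₁, he₁C, hne10, ha1⟩ := circle_second_edge hC he₀ ha0
  obtain ⟨c, hca, hv₁⟩ := pair_decomp e₁.2 ha1
  have hac : a ≠ c := Ne.symm hca
  have hcb : c ≠ b := by
    rintro rfl
    exact hne10 (Subtype.ext (hv₁.trans hv₀.symm))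
  have hbc : b ≠ c := Ne.symm hcb
  set e₂ : {q : Finset N // q.card = 2} := ⟨{c, b}, Finset.card_pair hcb⟩ with he₂def
  have hv₂ : e₂.val = {c, b} := rfl
  have he₁mem : e₁ ∈ C.erase e₀ := Finset.mem_erase.mpr ⟨hne10, he₁C⟩
  obtain ⟨hx₁l, hx₁r⟩ := hx e₁ he₁mem a c hv₁
  -- the generic span-invariant (2)
  have hXsub : ∀ f ∈ C.erase e₀,
      x f ∈ G.span (ν '' ↑((completeMGraph N).nodesOf (C.erase e₀))) := by
    intro f hf
    obtain ⟨v, w, hvw, hval⟩ := Finset.card_eq_two.mp f.2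
    obtain ⟨hfl, _⟩ := hx f hf v w hval
    refine G.line_nu_subset ?_ ?_ hfl
    · exact Finset.mem_coe.mpr (mem_nodesOf_complete.mpr ⟨f, hf, by simp [hval]⟩)
    · exact Finset.mem_coe.mpr (mem_nodesOf_complete.mpr ⟨f, hf, by simp [hval]⟩)
  have hinv : G.span ↑((C.erase e₀).image x) ⊆
      G.span (ν '' ↑((completeMGraph N).nodesOf (C.erase e₀))) := by
    refine G.span_le (G.isFlat_span _) ?_
    intro p hp
    rw [Finset.coe_image] at hp
    obtain ⟨f, hf, rfl⟩ := hp
    exact hXsub f (Finset.mem_coe.mp hf)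
  by_cases he₂C : e₂ ∈ C
  · -- base case: triangle
    have hCeq := triangle_closure hC he₀ he₁C he₂C (Ne.symm hne10) hv₀ hv₁ hv₂ hab hac hbc
    have h01 : e₀ ≠ e₁ := Ne.symm hne10
    have h02 : e₀ ≠ e₂ := by
      intro h
      have ha2 : a ∈ e₂.val := h ▸ ha0
      rw [hv₂] at ha2
      simp only [Finset.mem_insert, Finset.mem_singleton] at ha2
      tauto
    have h12 : e₁ ≠ e₂ := by
      intro h
      have ha2 : a ∈ e₂.val := h ▸ ha1
      rw [hv₂] at ha2
      simp only [Finset.mem_insert, Finset.mem_singleton] at ha2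
      tauto
    have herase : C.erase e₀ = {e₁, e₂} := by
      rw [hCeq]
      apply Finset.ext
      intro g
      simp only [Finset.mem_erase, Finset.mem_insert, Finset.mem_singleton]
      constructor
      · rintro ⟨hg0, hg⟩
        tauto
      · rintro (rfl | rfl)
        · exact ⟨Ne.symm h01, Or.inr (Or.inl rfl)⟩
        · exact ⟨Ne.symm h02, Or.inr (Or.inr rfl)⟩
    have he₂mem : e₂ ∈ C.erase e₀ := Finset.mem_erase.mpr ⟨Ne.symm h02, he₂C⟩
    obtain ⟨hx₂l, hx₂r⟩ := hx e₂ he₂mem c b hv₂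
    have hx12 : x e₁ ≠ x e₂ := by
      intro h
      have hpair := G.pair_unique hν hind hac hcb hx₁l (h ▸ hx₂l) hx₁r
      have : a ∈ ({c, b} : Finset N) := by
        rw [← hpair]
        simp
      simp only [Finset.mem_insert, Finset.mem_singleton] at this
      tauto
    have hXcoe : (↑((C.erase e₀).image x) : Set P) = insert (x e₁) ({x e₂} : Set P) := by
      rw [herase]
      simp
    have hav : ∀ u : N, ν u ∉ G.span ↑((C.erase e₀).image x) := by
      rw [hXcoe]
      refine G.ext_avoid hν hind (G.isFlat_singleton (x e₂)) ⟨x e₂, rfl⟩ ?_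
        (W := {c, b}) ?_ ?_ ?_ hx₁l hx₁r
      · intro u hu
        rw [Set.mem_singleton_iff] at hu
        exact hx₂r ⟨u, hu⟩
      · intro p hp
        rw [Set.mem_singleton_iff] at hp
        subst hp
        exact G.line_nu_subset (A := {c, b}) (Set.mem_insert c _) (Set.mem_insert_of_mem c rfl) hx₂l
      · simp only [Set.mem_insert_iff, Set.mem_singleton_iff]
        push_neg
        exact ⟨hac, hab⟩
      · exact Set.mem_insert c _
    refine ⟨hav, hinv, ?_⟩
    obtain ⟨t, ht1, ht2⟩ := G.veblen_tri hν hab hac hbc hx₁l hx₁r hx₂l hx₂r hx12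
    refine ⟨t, ?_, ht2⟩
    have hm1 : x e₁ ∈ G.span ↑((C.erase e₀).image x) := by
      apply G.subset_span
      rw [hXcoe]
      exact Or.inl rfl
    have hm2 : x e₂ ∈ G.span ↑((C.erase e₀).image x) := by
      apply G.subset_span
      rw [hXcoe]
      exact Or.inr rfl
    exact G.line_subset_flat (G.isFlat_span _) hm1 hm2 ht1
  · -- inductive step: chord surgery
    set D := (C.erase e₀).erase e₁ with hDdef
    have hDsub : D ⊆ C.erase e₀ := Finset.erase_subset _ _
    have he₂D : e₂ ∉ D := fun h => he₂C ((Finset.erase_subset _ _) (hDsub h))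
    have hC' := circle_surgery hC he₀ he₁C (Ne.symm hne10) hv₀ hv₁ hv₂ hab hac hbc he₂C
    have herase' : (insert e₂ D).erase e₂ = D := Finset.erase_insert he₂D
    -- D is nonempty
    obtain ⟨fb, hfbC, hfb0, hfbv⟩ := circle_second_edge hC he₀ hb0
    have hfb1 : fb ≠ e₁ := by
      intro h
      rw [h, hv₁] at hfbv
      simp only [Finset.mem_insert, Finset.mem_singleton] at hfbv
      tauto
    have hfbD : fb ∈ D := Finset.mem_erase.mpr ⟨hfb1, Finset.mem_erase.mpr ⟨hfb0, hfbC⟩⟩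
    -- cardinalities
    have h2n : 2 ≤ n := by
      rw [← hcard]
      exact Finset.one_lt_card.mpr ⟨e₀, he₀, e₁, he₁C, Ne.symm hne10⟩
    have hcard' : (insert e₂ D).card < n := by
      rw [Finset.card_insert_of_notMem he₂D, hDdef,
        Finset.card_erase_of_mem he₁mem, Finset.card_erase_of_mem he₀, hcard]
      omega
    have hx' : ∀ f ∈ (insert e₂ D).erase e₂, ∀ v w : N, f.val = {v, w} →
        x f ∈ G.line (ν v) (ν w) ∧ x f ∉ Set.range ν := by
      rw [herase']
      intro f hf
      exact hx f (hDsub hf)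
    obtain ⟨h1', h2', y, hyF', hyl⟩ := IH _ hcard' (insert e₂ D) rfl hC' e₂
      (Finset.mem_insert_self _ _) c b hv₂ x hx'
    rw [herase'] at h1' h2' hyF'
    -- decompose X
    have hXdec : C.erase e₀ = insert e₁ D := (Finset.insert_erase he₁mem).symm
    have hXim : (C.erase e₀).image x = insert (x e₁) (D.image x) := by
      rw [hXdec, Finset.image_insert]
    have hXcoe : (↑((C.erase e₀).image x) : Set P) =
        insert (x e₁) (↑(D.image x) : Set P) := by
      rw [hXim]
      simp
    have hDXne : (G.span (↑(D.image x) : Set P)).Nonempty :=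
      ⟨x fb, G.subset_span (Finset.mem_coe.mpr (Finset.mem_image_of_mem x hfbD))⟩
    have hedgea := circle_edges_at hC he₀ he₁C (Ne.symm hne10) ha0 ha1
    have haW : a ∉ (↑((completeMGraph N).nodesOf D) : Set N) := by
      intro h
      rw [Finset.mem_coe, mem_nodesOf_complete] at h
      obtain ⟨f, hf, hvf⟩ := h
      obtain ⟨hf1, hf0, hfC⟩ : f ≠ e₁ ∧ f ≠ e₀ ∧ f ∈ C := by
        obtain ⟨u1, u2⟩ := Finset.mem_erase.mp hf
        obtain ⟨u3, u4⟩ := Finset.mem_erase.mp u2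
        exact ⟨u1, u3, u4⟩
      rcases hedgea f hfC hvf with rfl | rfl
      · exact hf0 rfl
      · exact hf1 rfl
    have hcW : c ∈ (↑((completeMGraph N).nodesOf D) : Set N) := by
      obtain ⟨fc, hfcC, hfc1, hfcv⟩ := circle_second_edge hC he₁C (by simp [hv₁] : c ∈ e₁.val)
      have hfc0 : fc ≠ e₀ := by
        intro h
        rw [h, hv₀] at hfcv
        simp only [Finset.mem_insert, Finset.mem_singleton] at hfcv
        tauto
      have hfcD : fc ∈ D := Finset.mem_erase.mpr ⟨hfc1, Finset.mem_erase.mpr ⟨hfc0, hfcC⟩⟩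
      exact Finset.mem_coe.mpr (mem_nodesOf_complete.mpr ⟨fc, hfcD, hfcv⟩)
    have hav : ∀ u : N, ν u ∉ G.span ↑((C.erase e₀).image x) := by
      have hspan : G.span (↑((C.erase e₀).image x) : Set P) =
          G.span (insert (x e₁) (G.span (↑(D.image x) : Set P))) := by
        rw [hXcoe]
        exact G.span_insert _ _
      rw [hspan]
      exact G.ext_avoid hν hind (G.isFlat_span _) hDXne h1' h2' haW hcW hx₁l hx₁r
    refine ⟨hav, hinv, ?_⟩
    have hyr : y ∉ Set.range ν := by
      rintro ⟨u, hu⟩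
      exact h1' u (hu ▸ hyF')
    have hx₁y : x e₁ ≠ y := by
      intro h
      have hpair := G.pair_unique hν hind hac hcb hx₁l (h ▸ hyl) hx₁r
      have : a ∈ ({c, b} : Finset N) := by
        rw [← hpair]
        simp
      simp only [Finset.mem_insert, Finset.mem_singleton] at this
      tauto
    obtain ⟨t, ht1, ht2⟩ := G.veblen_tri hν hab hac hbc hx₁l hx₁r hyl hyr hx₁y
    refine ⟨t, ?_, ht2⟩
    have hm1 : x e₁ ∈ G.span ↑((C.erase e₀).image x) := by
      apply G.subset_span
      rw [hXcoe]
      exact Or.inl rfl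
    have hm2 : y ∈ G.span ↑((C.erase e₀).image x) := by
      refine G.span_mono ?_ hyF'
      rw [hXcoe]
      exact Set.subset_insert _ _
    exact G.line_subset_flat (G.isFlat_span _) hm1 hm2 ht1

end Master


section Men
namespace ProjGeom

variable {P N : Type*} (G : ProjGeom P) {ν : N → P} {Ehat : Set P}

lemma men_ends_link (hE : ∀ x ∈ Ehat, x ∉ Set.range ν →
      ∃ pr : N × N, pr.1 ≠ pr.2 ∧ x ∈ G.line (ν pr.1) (ν pr.2))
    (e : ↥Ehat) (h : (e : P) ∉ Set.range ν) :
    ∃ pr : N × N, (G.menGraph ν Ehat hE).ends e = {pr.1, pr.2} ∧ pr.1 ≠ pr.2 ∧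
      (e : P) ∈ G.line (ν pr.1) (ν pr.2) := by
  refine ⟨(hE e e.2 h).choose, ?_, (hE e e.2 h).choose_spec.1, (hE e e.2 h).choose_spec.2⟩
  simp only [ProjGeom.menGraph]
  rw [dif_neg h]

lemma men_ends_basis (hν : Function.Injective ν)
    (hE : ∀ x ∈ Ehat, x ∉ Set.range ν →
      ∃ pr : N × N, pr.1 ≠ pr.2 ∧ x ∈ G.line (ν pr.1) (ν pr.2))
    (e : ↥Ehat) (v : N) (h : (e : P) = ν v) :
    (G.menGraph ν Ehat hE).ends e = {v} := by
  have hr : (e : P) ∈ Set.range ν := ⟨v, h.symm⟩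
  simp only [ProjGeom.menGraph]
  rw [dif_pos hr]
  have hch : ν (show ∃ u : N, ν u = (e : P) from hr).choose = (e : P) :=
    (show ∃ u : N, ν u = (e : P) from hr).choose_spec
  rw [Finset.singleton_inj]
  exact hν (hch.trans h)

lemma men_isLink_iff (hν : Function.Injective ν)
    (hE : ∀ x ∈ Ehat, x ∉ Set.range ν →
      ∃ pr : N × N, pr.1 ≠ pr.2 ∧ x ∈ G.line (ν pr.1) (ν pr.2))
    (e : ↥Ehat) :
    (G.menGraph ν Ehat hE).IsLink e ↔ (e : P) ∉ Set.range ν := by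
  unfold MGraph.IsLink
  by_cases h : (e : P) ∈ Set.range ν
  · obtain ⟨v, hv⟩ := h
    rw [G.men_ends_basis hν hE e v hv.symm]
    simp
    exact ⟨v, hv⟩
  · obtain ⟨pr, hpr, hne, _⟩ := G.men_ends_link hE e h
    rw [hpr, Finset.card_pair hne]
    simp [h]

lemma men_link_line (hν : Function.Injective ν) (hind : G.Indep (Set.range ν))
    (hE : ∀ x ∈ Ehat, x ∉ Set.range ν →
      ∃ pr : N × N, pr.1 ≠ pr.2 ∧ x ∈ G.line (ν pr.1) (ν pr.2))
    {e : ↥Ehat} {v w : N} (hvw : v ≠ w)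
    (hends : (G.menGraph ν Ehat hE).ends e = {v, w}) (hr : (e : P) ∉ Set.range ν) :
    (e : P) ∈ G.line (ν v) (ν w) := by
  obtain ⟨pr, hpr, hne, hline⟩ := G.men_ends_link hE e hr
  rw [hpr] at hends
  have hv : v ∈ ({pr.1, pr.2} : Finset N) := by rw [hends]; simp
  have hw : w ∈ ({pr.1, pr.2} : Finset N) := by rw [hends]; simp
  simp only [Finset.mem_insert, Finset.mem_singleton] at hv hw
  rcases hv with hv | hv <;> rcases hw with hw | hw
  · exact absurd (hv.trans hw.symm) hvw
  · rw [hv, hw]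
    exact hline
  · rw [hv, hw, G.line_symm]
    exact hline
  · exact absurd (hv.trans hw.symm) hvw

lemma mem_edgeLineUnion {v w : N} (hvw : v ≠ w) {r : P}
    (hr : r ∈ G.line (ν v) (ν w)) : r ∈ G.edgeLineUnion ν := by
  unfold ProjGeom.edgeLineUnion
  exact Set.mem_iUnion.mpr ⟨v, Set.mem_iUnion.mpr ⟨w, Set.mem_iUnion.mpr ⟨hvw, hr⟩⟩⟩

end ProjGeom
end Men


/-! ## Statement 5 -/

/-- Let `N̂ = ν(N)` be an independent set of points in a
projective geometry.  Then `Ω(N̂, Ê^•(N̂))`, the biased graph constructed from the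
set of all points on edge lines of `N̂`, is a full biased expansion of the
complete graph `K_N`: it has a half edge at every node, and the natural
projection sending each link to the edge of `K_N` determined by its endpoints
makes (the link part of) it a biased expansion of `K_N`. -/
theorem stmt5 {P N : Type*} [Nontrivial N] (G : ProjGeom P) (ν : N → P)
    (hν : Function.Injective ν) (hind : G.Indep (Set.range ν))
    (hE : ∀ x ∈ G.edgeLineUnion ν, x ∉ Set.range ν →
      ∃ pr : N × N, pr.1 ≠ pr.2 ∧ x ∈ G.line (ν pr.1) (ν pr.2)) :
    (∀ v : N, ∃ e : ↥(G.edgeLineUnion ν),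
        (G.menGraph ν (G.edgeLineUnion ν) hE).ends e = ({v} : Finset N)) ∧
    ∃ p : {e : ↥(G.edgeLineUnion ν) //
            (G.menGraph ν (G.edgeLineUnion ν) hE).IsLink e} →
          {q : Finset N // q.card = 2},
      IsBiasedExpansion ((G.menGraph ν (G.edgeLineUnion ν) hE).linkGraph)
        ((G.menGraph ν (G.edgeLineUnion ν) hE).linkBal
          (G.menBal ν (G.edgeLineUnion ν) hE))
        (completeMGraph N) p := by
  constructor
  · intro v
    obtain ⟨w, hw⟩ := exists_ne v
    have hmem : ν v ∈ G.edgeLineUnion ν :=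
      G.mem_edgeLineUnion (Ne.symm hw) (G.left_mem_line (ν v) (ν w))
    exact ⟨⟨ν v, hmem⟩, G.men_ends_basis hν hE _ v rfl⟩
  set M := G.menGraph ν (G.edgeLineUnion ν) hE with hM
  refine ⟨fun e => ⟨M.ends e.1, e.2⟩, ?_, fun e => rfl, ?_⟩
  · -- surjectivity
    rintro ⟨q, hq2⟩
    obtain ⟨v, w, hvw, hqval⟩ := Finset.card_eq_two.mp hq2
    obtain ⟨r, hr, hrv, hrw⟩ := G.exists_third (ν v) (ν w) (hν.ne hvw)
    have hrr : r ∉ Set.range ν := G.not_range_of_on_line hν hind hvw hr hrv hrw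
    have hrE : r ∈ G.edgeLineUnion ν := G.mem_edgeLineUnion hvw hr
    have hl : M.IsLink ⟨r, hrE⟩ := (G.men_isLink_iff hν hE _).mpr hrr
    refine ⟨⟨⟨r, hrE⟩, hl⟩, ?_⟩
    apply Subtype.ext
    show M.ends ⟨r, hrE⟩ = q
    obtain ⟨pr, hpr, hprne, hprl⟩ := G.men_ends_link hE ⟨r, hrE⟩ hrr
    rw [hpr, hqval]
    exact G.pair_unique hν hind hprne hvw hprl hr hrr
  · -- circle lifting
    intro C hC e₀ he₀ s hs
    obtain ⟨a, b, hab, hv₀⟩ := Finset.card_eq_two.mp e₀.2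
    set x : {q : Finset N // q.card = 2} → P := fun f => ((s f).1 : P) with hxdef
    have hxval : ∀ f, x f = ((s f).1 : P) := fun f => rfl
    have hx : ∀ f ∈ C.erase e₀, ∀ v w : N, f.val = {v, w} →
        x f ∈ G.line (ν v) (ν w) ∧ x f ∉ Set.range ν := by
      intro f hf v w hval
      have hvw : v ≠ w := by
        rintro rfl
        have h2 := f.2
        rw [hval] at h2
        simp at h2
      have hends : M.ends (s f).1 = f.val := congrArg Subtype.val (hs f hf)
      have hr : ((s f).1 : P) ∉ Set.range ν := (G.men_isLink_iff hν hE _).mp (s f).2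
      exact ⟨G.men_link_line hν hind hE hvw (by rw [hends, hval]) hr, hr⟩
    obtain ⟨hav, hinv, tp, htF, htl⟩ :=
      master G hν hind C.card C rfl hC e₀ he₀ a b hv₀ x hx
    have htr : tp ∉ Set.range ν := by
      rintro ⟨u, hu⟩
      exact hav u (hu ▸ htF)
    have htE : tp ∈ G.edgeLineUnion ν := G.mem_edgeLineUnion hab htl
    have htlink : M.IsLink ⟨tp, htE⟩ := (G.men_isLink_iff hν hE _).mpr htr
    set tE : ↥(G.edgeLineUnion ν) := (⟨tp, htE⟩ : ↥(G.edgeLineUnion ν)) with htEdef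
    set t : {e : ↥(G.edgeLineUnion ν) // M.IsLink e} := ⟨tE, htlink⟩ with htdef
    have hends_t : M.ends tE = e₀.val := by
      obtain ⟨pr, hpr, hprne, hprl⟩ := G.men_ends_link hE tE htr
      rw [hpr, hv₀]
      exact G.pair_unique hν hind hprne hab hprl htl htr
    set ψ : {q : Finset N // q.card = 2} → ↥(G.edgeLineUnion ν) :=
      fun f => if f = e₀ then tE else (s f).1 with hψdef
    have hψe₀ : ψ e₀ = tE := if_pos rfl
    have hψne : ∀ f, f ≠ e₀ → ψ f = (s f).1 := fun f h => if_neg h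
    have himageq : ∀ t' : {e : ↥(G.edgeLineUnion ν) // M.IsLink e},
        ((C.erase e₀).image s ∪ {t'}).image Subtype.val =
          (C.erase e₀).image (fun f => ((s f).1 : ↥(G.edgeLineUnion ν))) ∪ {t'.1} := by
      intro t'
      rw [Finset.image_union, Finset.image_image, Finset.image_singleton]
      rfl
    have himaget : (C.erase e₀).image (fun f => ((s f).1 : ↥(G.edgeLineUnion ν))) ∪ {tE} =
        C.image ψ := by
      have h1 : (C.erase e₀).image (fun f => ((s f).1 : ↥(G.edgeLineUnion ν))) =
          (C.erase e₀).image ψ := by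
        apply Finset.image_congr
        intro f hf
        rw [Finset.mem_coe, Finset.mem_erase] at hf
        exact (hψne f hf.1).symm
      rw [h1]
      conv_rhs => rw [← Finset.insert_erase he₀]
      rw [Finset.image_insert, hψe₀, Finset.union_comm, ← Finset.insert_eq]
    have hends_ψ : ∀ f ∈ C, M.ends (ψ f) = (completeMGraph N).ends f := by
      intro f hf
      by_cases h : f = e₀
      · rw [h, hψe₀, hends_t]
        rfl
      · rw [hψne f h]
        exact congrArg Subtype.val (hs f (Finset.mem_erase.mpr ⟨h, hf⟩))
    have hinj : Set.InjOn ψ ↑C := by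
      intro f hf g hg hfg
      by_cases hf0 : f = e₀ <;> by_cases hg0 : g = e₀
      · rw [hf0, hg0]
      · exfalso
        rw [hf0, hψe₀, hψne g hg0] at hfg
        apply hg0
        have hval : g.val = M.ends (s g).1 :=
          (congrArg Subtype.val (hs g (Finset.mem_erase.mpr ⟨hg0, Finset.mem_coe.mp hg⟩))).symm
        apply Subtype.ext
        rw [hval, ← hfg, hends_t]
      · exfalso
        rw [hg0, hψe₀, hψne f hf0] at hfg
        apply hf0
        have hval : f.val = M.ends (s f).1 :=
          (congrArg Subtype.val (hs f (Finset.mem_erase.mpr ⟨hf0, Finset.mem_coe.mp hf⟩))).symm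
        apply Subtype.ext
        rw [hval, hfg, hends_t]
      · rw [hψne f hf0, hψne g hg0] at hfg
        have hsfg : s f = s g := Subtype.ext hfg
        rw [← hs f (Finset.mem_erase.mpr ⟨hf0, Finset.mem_coe.mp hf⟩),
          ← hs g (Finset.mem_erase.mpr ⟨hg0, Finset.mem_coe.mp hg⟩), hsfg]
    refine ⟨t, ⟨Subtype.ext hends_t, ?_⟩, ?_⟩
    · -- membership in the balanced class
      show (((C.erase e₀).image s ∪ {t}).image Subtype.val) ∈
        G.menBal ν (G.edgeLineUnion ν) hE
      rw [himageq t, himaget]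
      refine ⟨hC.transfer hinj hends_ψ, G.span ↑((C.erase e₀).image x),
        ⟨G.isFlat_span _, hav⟩, ?_⟩
      intro e he
      obtain ⟨f, hf, rfl⟩ := Finset.mem_image.mp he
      by_cases h : f = e₀
      · rw [h, hψe₀]
        exact htF
      · rw [hψne f h, ← hxval f]
        exact G.subset_span (Finset.mem_coe.mpr
          (Finset.mem_image_of_mem x (Finset.mem_erase.mpr ⟨h, hf⟩)))
    · -- uniqueness
      rintro t' ⟨hpt', hbal'⟩
      have hmem' : (((C.erase e₀).image s ∪ {t'}).image Subtype.val) ∈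
          G.menBal ν (G.edgeLineUnion ν) hE := hbal'
      obtain ⟨-, tt, ⟨httf, httnu⟩, httmem⟩ := hmem'
      have hends_t' : M.ends t'.1 = ({a, b} : Finset N) := by
        have h0 : M.ends t'.1 = e₀.val := congrArg Subtype.val hpt'
        rw [h0, hv₀]
      have ht'r : ((t'.1 : ↥(G.edgeLineUnion ν)) : P) ∉ Set.range ν :=
        (G.men_isLink_iff hν hE _).mp t'.2
      have ht'l : ((t'.1 : ↥(G.edgeLineUnion ν)) : P) ∈ G.line (ν a) (ν b) :=
        G.men_link_line hν hind hE hab hends_t' ht'r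
      have hXtt : (↑((C.erase e₀).image x) : Set P) ⊆ tt := by
        intro pt hpt
        rw [Finset.coe_image] at hpt
        obtain ⟨f, hf, rfl⟩ := hpt
        rw [hxval f]
        refine httmem ((s f).1) ?_
        rw [himageq t']
        exact Finset.mem_union_left _
          (Finset.mem_image_of_mem _ (Finset.mem_coe.mp hf))
      have htspan : G.span ↑((C.erase e₀).image x) ⊆ tt := G.span_le httf hXtt
      have http : tp ∈ tt := htspan htF
      have htt' : ((t'.1 : ↥(G.edgeLineUnion ν)) : P) ∈ tt := by
        refine httmem t'.1 ?_
        rw [himageq t']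
        exact Finset.mem_union_right _ (Finset.mem_singleton_self _)
      have heq : ((t'.1 : ↥(G.edgeLineUnion ν)) : P) = tp := by
        by_contra hne
        have h1 : G.line tp ((t'.1 : ↥(G.edgeLineUnion ν)) : P) = G.line (ν a) (ν b) :=
          G.line_unique (ν a) (ν b) tp _ (hν.ne hab) htl ht'l (fun h => hne h.symm)
        have hline : G.line (ν a) (ν b) ⊆ tt := by
          rw [← h1]
          exact G.line_subset_flat httf http htt'
        exact httnu a (hline (G.left_mem_line _ _))
      apply Subtype.ext
      apply Subtype.ext
      exact heq
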